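/- arXiv:2210.04383 — 3 statements merged into one kernel-verified Lean document; each statement's English description precedes it below -/
import Mathlib

section
/- More generally, if ϖ₂ is a modulus of continuity with lim_{x→0⁺} ϖ₂(x)/x = +∞ (equivalently, limsup n·ϖ₂(1/n) = +∞), then there is no bounded function ω : [0,1] → ℝ with |ω(ξ) − ω(ζ)| ≥ ϖ₂(|ξ − ζ|) for all distinct ξ, ζ ∈ [0,1] with |ξ − ζ| ≤ 1. -/
/-- A modulus of continuity. -/
def IsModulusOfContinuity (ϖ : ℝ → ℝ) : Prop :=
  StrictMonoOn ϖ (Set.Ioi 0) ∧ ContinuousOn ϖ (Set.Ioi 0) ∧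
  (∀ x > (0:ℝ), 0 < ϖ x) ∧ Filter.Tendsto ϖ (nhdsWithin 0 (Set.Ioi 0)) (nhds 0)

/-- if ϖ₂ is a modulus of continuity with ϖ₂(x)/x → +∞ as x → 0⁺,
then there is no bounded ω : [0,1] → ℝ with |ω(ξ) − ω(ζ)| ≥ ϖ₂(|ξ − ζ|) for all
distinct ξ, ζ ∈ [0,1] with |ξ − ζ| ≤ 1. -/
theorem stmt_4 (ϖ₂ : ℝ → ℝ) (hmod : IsModulusOfContinuity ϖ₂)
    (hfast : Filter.Tendsto (fun x => ϖ₂ x / x) (nhdsWithin 0 (Set.Ioi 0)) Filter.atTop)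
    (ω : ℝ → ℝ) (M : ℝ) (hb : ∀ ξ ∈ Set.Icc (0:ℝ) 1, |ω ξ| ≤ M) :
    ¬ (∀ ξ ∈ Set.Icc (0:ℝ) 1, ∀ ζ ∈ Set.Icc (0:ℝ) 1, ξ ≠ ζ → |ξ - ζ| ≤ 1 →
        ϖ₂ |ξ - ζ| ≤ |ω ξ - ω ζ|) := by
  intro h
  obtain ⟨hmono, -, hpos, -⟩ := hmod
  have hM : 0 ≤ M := (abs_nonneg _).trans (hb 0 (by norm_num))
  have h2M : ∀ᶠ x in nhdsWithin 0 (Set.Ioi 0), 2*M < ϖ₂ x / x :=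
    hfast.eventually (Filter.eventually_gt_atTop (2*M))
  have hseq : Filter.Tendsto (fun n : ℕ => (1:ℝ)/(n+1)) Filter.atTop
      (nhdsWithin 0 (Set.Ioi 0)) := by
    apply tendsto_nhdsWithin_of_tendsto_nhds_of_eventually_within
    · exact tendsto_one_div_add_atTop_nhds_zero_nat
    · exact Filter.Eventually.of_forall fun n => Set.mem_Ioi.mpr (by positivity)
  obtain ⟨n, hn⟩ := (hseq.eventually h2M).exists
  set N : ℕ := n + 1 with hNdef
  have hNR : ((N:ℝ)) = (n:ℝ) + 1 := by push_cast [hNdef]; ring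
  have hNpos : (0:ℝ) < N := by rw [hNR]; positivity
  set δ : ℝ := ϖ₂ (1/(N:ℝ)) with hδdef
  have h1N : (0:ℝ) < 1/(N:ℝ) := by positivity
  have hδ : 0 < δ := hpos _ h1N
  have hNδ : 2*M < (N:ℝ) * δ := by
    have hn' : 2*M < δ / (1/(N:ℝ)) := by
      simpa [hδdef, hNR] using hn
    rw [div_div_eq_mul_div, div_one] at hn'
    linarith
  -- membership and separation
  have hmem : ∀ k : ℕ, k ≤ N → (k:ℝ)/N ∈ Set.Icc (0:ℝ) 1 := by
    intro k hk
    constructor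
    · positivity
    · rw [div_le_one hNpos]; exact_mod_cast hk
  have hsep : ∀ k l : ℕ, k ≤ N → l ≤ N → k ≠ l →
      δ ≤ |ω ((k:ℝ)/N) - ω ((l:ℝ)/N)| := by
    intro k l hk hl hkl
    have hk' := hmem k hk
    have hl' := hmem l hl
    have h1 : (1:ℝ) ≤ |(k:ℝ) - (l:ℝ)| := by
      have hz : (k:ℤ) - (l:ℤ) ≠ 0 := sub_ne_zero.mpr (by exact_mod_cast hkl)
      have h2 : (1:ℤ) ≤ |(k:ℤ) - (l:ℤ)| := Int.one_le_abs hz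
      have h3 : ((1:ℤ):ℝ) ≤ ((|(k:ℤ) - (l:ℤ)|:ℤ):ℝ) := by exact_mod_cast h2
      push_cast at h3
      exact h3
    have habs : |(k:ℝ)/N - (l:ℝ)/N| = |(k:ℝ) - (l:ℝ)| / N := by
      rw [div_sub_div_same, abs_div, abs_of_pos hNpos]
    have hge : 1/(N:ℝ) ≤ |(k:ℝ)/N - (l:ℝ)/N| := by
      rw [habs]
      gcongr
    have hne : (k:ℝ)/N ≠ (l:ℝ)/N := by
      intro he
      apply hkl
      field_simp at he
      exact_mod_cast he
    have hle1 : |(k:ℝ)/N - (l:ℝ)/N| ≤ 1 := by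
      rw [abs_le]
      constructor <;> [linarith [hk'.1, hk'.2, hl'.1, hl'.2]; linarith [hk'.1, hk'.2, hl'.1, hl'.2]]
    have hmem2 : |(k:ℝ)/N - (l:ℝ)/N| ∈ Set.Ioi (0:ℝ) := by
      simp only [Set.mem_Ioi]
      exact abs_pos.mpr (sub_ne_zero.mpr hne)
    have hϖle : δ ≤ ϖ₂ |(k:ℝ)/N - (l:ℝ)/N| :=
      hmono.monotoneOn h1N hmem2 hge
    exact hϖle.trans (h _ hk' _ hl' hne hle1)
  -- pigeonhole
  set φ : ℕ → ℤ := fun k => ⌊(ω ((k:ℝ)/N) + M)/δ⌋ with hφdef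
  have hφrange : ∀ k : ℕ, k ≤ N → 0 ≤ φ k ∧ φ k < N := by
    intro k hk
    have hbk := hb _ (hmem k hk)
    rw [abs_le] at hbk
    constructor
    · apply Int.floor_nonneg.mpr
      apply div_nonneg (by linarith [hbk.1]) hδ.le
    · rw [Int.floor_lt]
      have hc : (((N:ℤ)):ℝ) = (N:ℝ) := by push_cast; ring
      rw [hc, div_lt_iff₀ hδ]
      linarith [hbk.2, hNδ]
  have hφinj : ∀ k l : ℕ, k ≤ N → l ≤ N → φ k = φ l → k = l := by
    intro k l hk hl he
    by_contra hkl
    have hs := hsep k l hk hl hkl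
    set a := (ω ((k:ℝ)/N) + M)/δ with hadef
    set b := (ω ((l:ℝ)/N) + M)/δ with hbdef
    have he' : ⌊a⌋ = ⌊b⌋ := he
    have h1 : a < b + 1 := by
      have := Int.lt_floor_add_one a
      have := Int.floor_le b
      rw [he'] at *
      push_cast at *
      linarith
    have h2 : b < a + 1 := by
      have := Int.lt_floor_add_one b
      have := Int.floor_le a
      rw [he'] at *
      push_cast at *
      linarith
    have hab : |a - b| < 1 := by rw [abs_lt]; constructor <;> linarith
    have heq : a - b = (ω ((k:ℝ)/N) - ω ((l:ℝ)/N))/δ := by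
      rw [hadef, hbdef, div_sub_div_same]
      congr 1
      ring
    rw [heq, abs_div, abs_of_pos hδ, div_lt_one hδ] at hab
    linarith
  -- contradiction with card
  have hinj : Function.Injective (fun k : Fin (N+1) =>
      (⟨(φ k).toNat, by
        have := hφrange k (Nat.lt_succ_iff.mp k.2)
        omega⟩ : Fin N)) := by
    intro k l he
    simp only [Fin.mk.injEq] at he
    have hk := hφrange k (Nat.lt_succ_iff.mp k.2)
    have hl := hφrange l (Nat.lt_succ_iff.mp l.2)
    have : φ k = φ l := by omega
    exact Fin.ext (hφinj k l (Nat.lt_succ_iff.mp k.2) (Nat.lt_succ_iff.mp l.2) this)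
  have := Fintype.card_le_of_injective _ hinj
  simp at this
end

section
/- Let a ∈ ℕ with a ≥ 1, x > 0 with a·x ≥ 1, and write a·x = N + r with N ∈ ℕ and 0 < |r| ≤ 1/2. Set Δ = (−sgn(r)/2 − r)/a. Then 1/2 ≤ |Δ|·a ≤ 1 and |sin(π a (x + Δ)) − sin(π a x)| = |sgn(r) + sin(π r)| ≥ 1. -/
/-- the single-frequency lower bound in the construction of a nowhere
ϖ₁-continuous function: shifting x by Δ = (−sgn(r)/2 − r)/a moves ax to a half-integer
and the resulting oscillation of sin(πax) is at least 1. -/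
theorem stmt_13 (a : ℕ) (ha : 1 ≤ a) (x : ℝ) (hx : 0 < x) (hax : 1 ≤ (a : ℝ) * x)
    (N : ℕ) (r : ℝ) (hNr : (a : ℝ) * x = (N : ℝ) + r) (hr0 : 0 < |r|) (hr : |r| ≤ 1 / 2) :
    let Δ : ℝ := (-(Real.sign r) / 2 - r) / (a : ℝ)
    1 / 2 ≤ |Δ| * (a : ℝ) ∧ |Δ| * (a : ℝ) ≤ 1 ∧
    |Real.sin (Real.pi * a * (x + Δ)) - Real.sin (Real.pi * a * x)| =
      |Real.sign r + Real.sin (Real.pi * r)| ∧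
    1 ≤ |Real.sign r + Real.sin (Real.pi * r)| := by
  intro Δ
  have ha' : (0:ℝ) < a := by exact_mod_cast ha
  have hrne : r ≠ 0 := abs_pos.mp hr0
  set s := Real.sign r with hsdef
  have hs : s = 1 ∨ s = -1 := by
    rcases hrne.lt_or_gt with h | h
    · right; exact Real.sign_of_neg h
    · left; exact Real.sign_of_pos h
  have hΔa : |Δ| * a = |(-s/2 - r)| := by
    rw [show Δ = (-s/2 - r) / a from rfl, abs_div, abs_of_pos ha',
      div_mul_cancel₀ _ ha'.ne']
  have habs : |(-s/2 - r)| = 1/2 + |r| := by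
    rcases hs with h | h
    · rcases hrne.lt_or_gt with hrlt | hrlt
      · exfalso; rw [hsdef, Real.sign_of_neg hrlt] at h; norm_num at h
      · rw [h, abs_of_neg (by linarith), abs_of_pos hrlt]; ring
    · rcases hrne.lt_or_gt with hrlt | hrlt
      · rw [h, abs_of_pos (by linarith), abs_of_neg hrlt]; ring
      · exfalso; rw [hsdef, Real.sign_of_pos hrlt] at h; norm_num at h
  have h1 : 1/2 ≤ |Δ| * a := by rw [hΔa, habs]; linarith [abs_nonneg r]
  have h2 : |Δ| * a ≤ 1 := by rw [hΔa, habs]; linarith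
  have key : Real.pi * a * (x + Δ) = N * Real.pi - s * (Real.pi/2) := by
    have h : (a:ℝ) * (x + Δ) = N - s/2 := by
      have : (a:ℝ) * Δ = -s/2 - r := by
        rw [show Δ = (-s/2 - r) / a from rfl, mul_div_cancel₀ _ ha'.ne']
      nlinarith [hNr]
    rw [mul_assoc, h]; ring
  have key2 : Real.pi * a * x = N * Real.pi + Real.pi * r := by
    rw [mul_assoc, hNr]; ring
  have hsin1 : Real.sin (Real.pi * a * (x + Δ)) = -s * (-1)^N := by
    rw [key, show (N:ℝ) * Real.pi - s * (Real.pi/2) = -(s * (Real.pi/2)) + N * Real.pi by ring,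
      Real.sin_add_nat_mul_pi, Real.sin_neg]
    rcases hs with h | h <;> rw [h] <;> simp <;> ring
  have hsin2 : Real.sin (Real.pi * a * x) = (-1)^N * Real.sin (Real.pi * r) := by
    rw [key2, show (N:ℝ) * Real.pi + Real.pi * r = Real.pi * r + N * Real.pi by ring,
      Real.sin_add_nat_mul_pi]
  have heq : |Real.sin (Real.pi * a * (x + Δ)) - Real.sin (Real.pi * a * x)| =
      |s + Real.sin (Real.pi * r)| := by
    rw [hsin1, hsin2, show -s * (-1:ℝ)^N - (-1)^N * Real.sin (Real.pi * r)
      = (-1)^N * (-(s + Real.sin (Real.pi * r))) by ring, abs_mul]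
    simp
    rw [← abs_neg]; ring_nf
  have hlast : 1 ≤ |s + Real.sin (Real.pi * r)| := by
    rcases hrne.lt_or_gt with hrlt | hrlt
    · have hsv : s = -1 := by rw [hsdef, Real.sign_of_neg hrlt]
      have habs' : |r| = -r := abs_of_neg hrlt
      have hsinle : Real.sin (Real.pi * r) ≤ 0 := by
        have : Real.sin (Real.pi * (-r)) ≥ 0 := by
          apply Real.sin_nonneg_of_nonneg_of_le_pi
          · nlinarith [Real.pi_pos]
          · nlinarith [Real.pi_pos, habs' ▸ hr]
        rw [mul_neg, Real.sin_neg] at this; linarith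
      rw [hsv, abs_of_nonpos (by linarith [Real.neg_one_le_sin (Real.pi * r)])]
      linarith
    · have hsv : s = 1 := by rw [hsdef, Real.sign_of_pos hrlt]
      have hsinge : 0 ≤ Real.sin (Real.pi * r) := by
        apply Real.sin_nonneg_of_nonneg_of_le_pi
        · positivity
        · nlinarith [Real.pi_pos, (abs_of_pos hrlt) ▸ hr]
      rw [hsv, abs_of_nonneg (by linarith)]; linarith
  exact ⟨h1, h2, heq, hlast⟩
end

section
/- Let (b_n) be a summable sequence of positive reals and (a_n) positive reals with Σ a_n b_n = +∞. For h > 0 define N(h) = max{N ∈ ℕ : hπ Σ_{n=1}^{N} a_n b_n ≤ 2 Σ_{n=N+1}^∞ b_n} and ϖ*(h) = 4 Σ_{n=N(h)+1}^∞ b_n. Then N(h) → +∞ and ϖ*(h) → 0 as h → 0⁺, and the function f(x) = Σ_{n=1}^∞ b_n sin(π a_n x) satisfies |f(x+h) − f(x)| ≤ ϖ*(h) for all x ∈ ℝ and all sufficiently small h > 0. -/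
/-!
Each term of `f (x + h) - f x` is at most `b n * π * a n * h` (sine is 1-Lipschitz) and at
most `2 * b n`. Using the first bound for `n < N` and the second for `n ≥ N` gives
`|f (x + h) - f x| ≤ h π Σ_{n<N} aₙbₙ + 2 Σ_{n≥N} bₙ` for every `N`; at `N = N(h)` the head
is at most the tail, whence the bound `ϖ*(h)`. Since `Σ aₙbₙ = ∞`, the set defining `N(h)` is
finite, and for fixed `M` it contains `M` once `h` is small, so `N(h) → ∞` and `ϖ*(h) → 0`.
-/

/-- The Weierstrass-type series f(x) = Σ bₙ sin(π aₙ x). -/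
noncomputable def weierF (a b : ℕ → ℝ) (x : ℝ) : ℝ :=
  ∑' n, b n * Real.sin (Real.pi * a n * x)

/-- N(h): the largest N with hπ Σ_{n<N} aₙbₙ ≤ 2 Σ_{n≥N} bₙ. -/
noncomputable def cutN (a b : ℕ → ℝ) (h : ℝ) : ℕ :=
  sSup {N : ℕ | h * Real.pi * ∑ n ∈ Finset.range N, a n * b n ≤ 2 * ∑' n, b (n + N)}

/-- ϖ*(h) = 4 Σ_{n ≥ N(h)} bₙ. -/
noncomputable def modStar (a b : ℕ → ℝ) (h : ℝ) : ℝ := 4 * ∑' n, b (n + cutN a b h)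

open Filter Topology Real

lemma summable_mul_sin {b : ℕ → ℝ} (hb : Summable b) (θ : ℕ → ℝ) :
    Summable fun n => b n * sin (θ n) :=
  hb.abs.of_norm_bounded fun n => by
    rw [norm_eq_abs, abs_mul]
    exact mul_le_of_le_one_right (abs_nonneg _) (abs_sin_le_one _)

lemma norm_tsum_le_sum_norm_add {E : Type*} [NormedAddCommGroup E] {c : ℕ → E} {g : ℕ → ℝ}
    {s : ℝ} (hc : Summable c) (N : ℕ) (hg : HasSum g s) (htail : ∀ n, ‖c (n + N)‖ ≤ g n) :
    ‖∑' n, c n‖ ≤ ∑ n ∈ Finset.range N, ‖c n‖ + s := by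
  rw [← hc.sum_add_tsum_nat_add N]
  exact (norm_add_le _ _).trans
    (add_le_add (norm_sum_le _ _) (tsum_of_norm_bounded hg htail))

lemma abs_sin_sub_sin_le_two (u v : ℝ) : |sin u - sin v| ≤ 2 := by
  linarith [abs_sub (sin u) (sin v), abs_sin_le_one u, abs_sin_le_one v]

lemma tsum_nat_add_le_tsum {b : ℕ → ℝ} (hb : ∀ n, 0 ≤ b n) (hsum : Summable b) (N : ℕ) :
    ∑' n, b (n + N) ≤ ∑' n, b n := by
  rw [← hsum.sum_add_tsum_nat_add N]
  exact le_add_of_nonneg_left (Finset.sum_nonneg fun n _ => hb n)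

lemma bddAbove_setOf_mul_le {C T : ℕ → ℝ} {c M : ℝ} (hc : 0 < c)
    (hC : Tendsto C atTop atTop) (hT : ∀ N, T N ≤ M) :
    BddAbove {N | c * C N ≤ T N} := by
  obtain ⟨K, hK⟩ := eventually_atTop.1 ((hC.const_mul_atTop hc).eventually_gt_atTop M)
  exact ⟨K, fun N hN => not_lt.1 fun hKN => (hK N hKN.le).not_ge (hN.trans (hT N))⟩

section Weierstrass

variable {a b : ℕ → ℝ}

lemma weierF_sub (hsum : Summable b) (x y : ℝ) :
    weierF a b x - weierF a b y =
      ∑' n, b n * (sin (π * a n * x) - sin (π * a n * y)) := by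
  rw [weierF, weierF, ← (summable_mul_sin hsum _).tsum_sub (summable_mul_sin hsum _)]
  simp_rw [mul_sub]

lemma abs_weierF_add_sub_le (ha : ∀ n, 0 ≤ a n) (hb : ∀ n, 0 ≤ b n) (hsum : Summable b)
    {h : ℝ} (hh : 0 ≤ h) (x : ℝ) (N : ℕ) :
    |weierF a b (x + h) - weierF a b x| ≤
      h * π * ∑ n ∈ Finset.range N, a n * b n + 2 * ∑' n, b (n + N) := by
  set c := fun n => b n * (sin (π * a n * (x + h)) - sin (π * a n * x))
  have hc_summable : Summable c := by
    simpa only [c, mul_sub] using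
      (summable_mul_sin hsum _).sub (summable_mul_sin hsum fun n => π * a n * x)
  have hc_lipschitz (n : ℕ) : ‖c n‖ ≤ h * π * (a n * b n) := by
    have hlip := abs_sin_sub_sin_le (π * a n * (x + h)) (π * a n * x)
    rw [show π * a n * (x + h) - π * a n * x = π * a n * h by ring,
      abs_of_nonneg (a := π * a n * h) (mul_nonneg (mul_nonneg pi_pos.le (ha n)) hh)] at hlip
    calc ‖c n‖ = b n * |sin (π * a n * (x + h)) - sin (π * a n * x)| := by
          rw [norm_eq_abs, abs_mul, abs_of_nonneg (hb n)]
      _ ≤ b n * (π * a n * h) := mul_le_mul_of_nonneg_left hlip (hb n)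
      _ = h * π * (a n * b n) := by ring
  have hc_bounded (n : ℕ) : ‖c n‖ ≤ 2 * b n := by
    rw [norm_eq_abs, abs_mul, abs_of_nonneg (hb n), mul_comm]
    exact mul_le_mul_of_nonneg_right (abs_sin_sub_sin_le_two _ _) (hb n)
  rw [weierF_sub hsum, Finset.mul_sum, ← norm_eq_abs]
  refine (norm_tsum_le_sum_norm_add hc_summable N
    (((summable_nat_add_iff N).2 hsum).hasSum.mul_left 2) fun n => hc_bounded _).trans ?_
  gcongr with n
  exact hc_lipschitz n

lemma bddAbove_cutN_set (hb : ∀ n, 0 ≤ b n) (hsum : Summable b)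
    (hdiv : Tendsto (fun N => ∑ n ∈ Finset.range N, a n * b n) atTop atTop)
    {h : ℝ} (hh : 0 < h) :
    BddAbove {N : ℕ | h * π * ∑ n ∈ Finset.range N, a n * b n ≤ 2 * ∑' n, b (n + N)} :=
  bddAbove_setOf_mul_le (by positivity) hdiv fun N =>
    mul_le_mul_of_nonneg_left (tsum_nat_add_le_tsum hb hsum N) zero_le_two

lemma cutN_spec (hb : ∀ n, 0 ≤ b n) (hsum : Summable b)
    (hdiv : Tendsto (fun N => ∑ n ∈ Finset.range N, a n * b n) atTop atTop)
    {h : ℝ} (hh : 0 < h) :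
    h * π * ∑ n ∈ Finset.range (cutN a b h), a n * b n ≤ 2 * ∑' n, b (n + cutN a b h) :=
  Nat.sSup_mem ⟨0, by simpa using tsum_nonneg fun n => hb (n + 0)⟩
    (bddAbove_cutN_set hb hsum hdiv hh)

lemma tendsto_cutN (hb : ∀ n, 0 < b n) (hsum : Summable b)
    (hdiv : Tendsto (fun N => ∑ n ∈ Finset.range N, a n * b n) atTop atTop) :
    Tendsto (cutN a b) (𝓝[>] 0) atTop := by
  refine tendsto_atTop.2 fun M => ?_
  have htail_pos : 0 < 2 * ∑' n, b (n + M) := mul_pos two_pos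
    (((summable_nat_add_iff M).2 hsum).tsum_pos (fun n => (hb _).le) 0 (hb _))
  have hhead_cont : Continuous fun h : ℝ => h * π * ∑ n ∈ Finset.range M, a n * b n := by
    fun_prop
  have hhead : Tendsto (fun h => h * π * ∑ n ∈ Finset.range M, a n * b n) (𝓝[>] 0) (𝓝 0) :=
    tendsto_nhdsWithin_of_tendsto_nhds (hhead_cont.tendsto' 0 0 (by simp))
  filter_upwards [hhead.eventually_lt_const htail_pos, self_mem_nhdsWithin] with h hM hh
  exact le_csSup (bddAbove_cutN_set (fun n => (hb n).le) hsum hdiv hh) hM.le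

lemma tendsto_modStar (hb : ∀ n, 0 < b n) (hsum : Summable b)
    (hdiv : Tendsto (fun N => ∑ n ∈ Finset.range N, a n * b n) atTop atTop) :
    Tendsto (modStar a b) (𝓝[>] 0) (𝓝 0) := by
  show Tendsto (fun h => 4 * ∑' n, b (n + cutN a b h)) _ _
  simpa using ((tendsto_sum_nat_add b).comp (tendsto_cutN hb hsum hdiv)).const_mul 4

end Weierstrass

/-- N(h) → ∞ and ϖ*(h) → 0 as h → 0⁺, and ϖ* is a modulus of continuity
for f, i.e. |f(x+h) − f(x)| ≤ ϖ*(h) for all x and all sufficiently small h > 0. -/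
theorem stmt_15 (a b : ℕ → ℝ) (ha : ∀ n, 0 < a n) (hb : ∀ n, 0 < b n)
    (hsum : Summable b)
    (hdiv : Filter.Tendsto (fun N => ∑ n ∈ Finset.range N, a n * b n)
      Filter.atTop Filter.atTop) :
    Filter.Tendsto (fun h => cutN a b h) (nhdsWithin 0 (Set.Ioi 0)) Filter.atTop ∧
    Filter.Tendsto (modStar a b) (nhdsWithin 0 (Set.Ioi 0)) (nhds 0) ∧
    ∀ᶠ h in nhdsWithin 0 (Set.Ioi 0), ∀ x : ℝ,
      |weierF a b (x + h) - weierF a b x| ≤ modStar a b h := by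
  refine ⟨tendsto_cutN hb hsum hdiv, tendsto_modStar hb hsum hdiv, ?_⟩
  filter_upwards [self_mem_nhdsWithin] with h (hh : 0 < h) x
  calc |weierF a b (x + h) - weierF a b x|
      ≤ h * π * ∑ n ∈ Finset.range (cutN a b h), a n * b n
          + 2 * ∑' n, b (n + cutN a b h) :=
        abs_weierF_add_sub_le (fun n => (ha n).le) (fun n => (hb n).le) hsum hh.le x _
    _ ≤ 4 * ∑' n, b (n + cutN a b h) := by
        linarith [cutN_spec (fun n => (hb n).le) hsum hdiv hh]
end
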